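/- arXiv:1909.10680 — 5 statements merged into one kernel-verified Lean document; each statement's English description precedes it below -/
import Mathlib

section
/- Let q > 3 and let f : ℝ³ → [0,∞) be measurable with ‖f‖_q := sup_{v∈ℝ³} (1+|v|)^q f(v) < ∞ and ρ_f > 0. Then there exists a constant C_q > 0, depending only on q, such that ρ_f ≤ C_q ‖f‖_q T_f^{3/2}. -/
/-!
Bound `f` by `‖f‖_q` on the ball of radius `R` around `U_f` and by `|v - U_f|² f(v) / R²` outside
it. Integrating gives `ρ_f ≤ ‖f‖_q |B_1| R³ + 3 ρ_f T_f / R²`, and the choice `R² = 6 T_f` absorbs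
the second term into half of the left-hand side. The second moment is positive because `f` has
positive mass and a point is Lebesgue-null, so `T_f > 0`.
-/

open MeasureTheory Real

abbrev E3 := EuclideanSpace ℝ (Fin 3)

open Metric Module

theorem le_of_one_add_rpow_mul_le {q x y N : ℝ} (hq : 0 ≤ q) (hx : 0 ≤ x) (hy : 0 ≤ y)
    (h : (1 + x) ^ q * y ≤ N) : y ≤ N :=
  calc y ≤ (1 + x) ^ q * y := le_mul_of_one_le_left hy (one_le_rpow (by linarith) hq)
    _ ≤ N := h

theorem measureReal_ball_eq_pow_mul {E : Type*} [NormedAddCommGroup E] [NormedSpace ℝ E]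
    [FiniteDimensional ℝ E] [MeasurableSpace E] [BorelSpace E] (μ : Measure E) [μ.IsAddHaarMeasure]
    (u : E) {R : ℝ} (hR : 0 < R) : μ.real (ball u R) = R ^ finrank ℝ E * μ.real (ball 0 1) := by
  rw [measureReal_def, Measure.addHaar_ball_of_pos μ u hR, ENNReal.toReal_mul,
    ENNReal.toReal_ofReal (by positivity), measureReal_def]

theorem integral_le_sup_mul_ball_add_moment_div_sq {E : Type*} [NormedAddCommGroup E]
    [NormedSpace ℝ E] [FiniteDimensional ℝ E] [MeasurableSpace E] [BorelSpace E]
    (μ : Measure E) [μ.IsAddHaarMeasure] {f : E → ℝ} {N R : ℝ} (u : E) (hf0 : ∀ v, 0 ≤ f v)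
    (hfN : ∀ v, f v ≤ N) (hf : Integrable f μ)
    (hm : Integrable (fun v => ‖v - u‖ ^ 2 * f v) μ) (hR : 0 < R) :
    ∫ v, f v ∂μ ≤
      N * μ.real (ball 0 1) * R ^ finrank ℝ E + (R ^ 2)⁻¹ * ∫ v, ‖v - u‖ ^ 2 * f v ∂μ := by
  have hpointwise : ∀ v, f v ≤
      (ball u R).indicator (fun _ => N) v + (R ^ 2)⁻¹ * (‖v - u‖ ^ 2 * f v) := by
    intro v
    by_cases hv : v ∈ ball u R
    · rw [Set.indicator_of_mem hv]
      have : 0 ≤ (R ^ 2)⁻¹ * (‖v - u‖ ^ 2 * f v) := by have := hf0 v; positivity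
      linarith [hfN v]
    · rw [Set.indicator_of_notMem hv, zero_add, le_inv_mul_iff₀ (by positivity)]
      have hRv : R ≤ ‖v - u‖ := by simpa [dist_eq_norm] using hv
      exact mul_le_mul_of_nonneg_right (pow_le_pow_left₀ hR.le hRv 2) (hf0 v)
  have hind : Integrable ((ball u R).indicator fun _ => N) μ :=
    (integrableOn_const measure_ball_lt_top.ne).integrable_indicator measurableSet_ball
  calc ∫ v, f v ∂μ
      ≤ ∫ v, (ball u R).indicator (fun _ => N) v + (R ^ 2)⁻¹ * (‖v - u‖ ^ 2 * f v) ∂μ :=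
        integral_mono hf (hind.add (hm.const_mul _)) hpointwise
    _ = N * μ.real (ball 0 1) * R ^ finrank ℝ E + (R ^ 2)⁻¹ * ∫ v, ‖v - u‖ ^ 2 * f v ∂μ := by
        rw [integral_add hind (hm.const_mul _), integral_indicator_const _ measurableSet_ball,
          integral_const_mul, measureReal_ball_eq_pow_mul μ u hR, smul_eq_mul]
        ring

theorem integral_sq_norm_sub_mul_pos {E : Type*} [NormedAddCommGroup E] [MeasurableSpace E]
    {μ : Measure E} [NullSingletonClass μ] {f : E → ℝ}
    (u : E) (hf0 : ∀ v, 0 ≤ f v) (hm : Integrable (fun v => ‖v - u‖ ^ 2 * f v) μ)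
    (hpos : 0 < ∫ v, f v ∂μ) : 0 < ∫ v, ‖v - u‖ ^ 2 * f v ∂μ := by
  have hm0 : 0 ≤ fun v => ‖v - u‖ ^ 2 * f v := fun v => mul_nonneg (sq_nonneg _) (hf0 v)
  refine (integral_nonneg hm0).lt_of_ne fun h => hpos.ne' ?_
  have hzero := (integral_eq_zero_iff_of_nonneg hm0 hm).1 h.symm
  have hne : ∀ᵐ v ∂μ, v ≠ u := by simp [ae_iff, measure_singleton]
  rw [integral_eq_zero_of_ae]
  filter_upwards [hzero, hne] with v hv hvu
  simpa [sub_ne_zero.2 hvu] using hv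

theorem le_of_le_mul_sqrt_pow_three_add {ρ A T : ℝ} (hT : 0 < T)
    (h : ρ ≤ A * √(6 * T) ^ 3 + (√(6 * T) ^ 2)⁻¹ * (3 * ρ * T)) :
    ρ ≤ 2 * 6 ^ ((3 : ℝ) / 2) * A * T ^ ((3 : ℝ) / 2) := by
  have h6T : (0 : ℝ) ≤ 6 * T := by positivity
  have hsq : √(6 * T) ^ 3 = 6 ^ ((3 : ℝ) / 2) * T ^ ((3 : ℝ) / 2) := by
    rw [← mul_rpow (by norm_num) hT.le, rpow_div_two_eq_sqrt _ h6T]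
    norm_cast
  rw [sq_sqrt h6T, hsq] at h
  have : (6 * T)⁻¹ * (3 * ρ * T) = ρ / 2 := by field_simp; ring
  linarith

/-- The weighted norm ‖f‖_q is encoded through an arbitrary upper bound N of
v ↦ (1+|v|)^q f(v). -/
theorem lem_temp_i (q : ℝ) (hq : 3 < q) :
    ∃ C : ℝ, 0 < C ∧
      ∀ (f : E3 → ℝ), Measurable f → (∀ v, 0 ≤ f v) →
        Integrable f →
        ∀ N : ℝ, (∀ v, (1 + ‖v‖) ^ q * f v ≤ N) →
        ∀ (ρf : ℝ) (Uf : E3) (Tf : ℝ),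
          ρf = ∫ v, f v →
          Integrable (fun v => f v • v) →
          Uf = ρf⁻¹ • ∫ v, f v • v →
          Integrable (fun v => ‖v - Uf‖ ^ 2 * f v) →
          Tf = (3 * ρf)⁻¹ * ∫ v, ‖v - Uf‖ ^ 2 * f v →
          0 < ρf →
          ρf ≤ C * N * Tf ^ ((3 : ℝ) / 2) := by
  set c := volume.real (ball (0 : E3) 1)
  have hc : 0 < c :=
    ENNReal.toReal_pos (measure_ball_pos _ _ one_pos).ne' measure_ball_lt_top.ne
  refine ⟨2 * 6 ^ ((3 : ℝ) / 2) * c, by positivity, ?_⟩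
  intro f _ hf0 hf N hN ρf Uf Tf hρ _ _ hm hT hρpos
  have hfN : ∀ v, f v ≤ N := fun v =>
    le_of_one_add_rpow_mul_le (by linarith) (norm_nonneg v) (hf0 v) (hN v)
  have hI : 0 < ∫ v, ‖v - Uf‖ ^ 2 * f v := integral_sq_norm_sub_mul_pos Uf hf0 hm (hρ ▸ hρpos)
  have hI3 : ∫ v, ‖v - Uf‖ ^ 2 * f v = 3 * ρf * Tf := by rw [hT]; field_simp
  have hTpos : 0 < Tf := by rw [hT]; positivity
  have hsplit := integral_le_sup_mul_ball_add_moment_div_sq volume Uf hf0 hfN hf hm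
    (R := √(6 * Tf)) (by positivity)
  rw [← hρ, hI3, finrank_euclideanSpace_fin] at hsplit
  have := le_of_le_mul_sqrt_pow_three_add hTpos hsplit
  linarith
end

section
/- Let q > 5 and let f : ℝ³ → [0,∞) be measurable with ‖f‖_q := sup_{v∈ℝ³} (1+|v|)^q f(v) < ∞ and ρ_f > 0. Then there exists a constant C_q > 0, depending only on q, such that ρ_f (T_f + |U_f|²)^{(q-3)/2} ≤ C_q ‖f‖_q. -/
/-!
The identity `3 ρ T + ρ |U|² = ∫ |v|² f` bounds `ρ (T + |U|²)` by the second moment of `f`.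
Splitting that moment at radius `R ≥ 1`, the bulk contributes at most `ρ R²` and, since
`f ≤ N (1 + |v|)^(-q)`, the tail at most `N J R^(5-q)` with `J = ∫_{|v|>1} |v|^(2-q)`, by scaling.
When `T + |U|² > 2`, the choice `R² = (T + |U|²)/2` absorbs the bulk term and leaves
`ρ (T + |U|²)^((q-3)/2) ≲ N J`; otherwise `ρ ≤ N ∫ (1 + |v|)^(-q)` is enough.
-/

open MeasureTheory Real

open Module Set
open scoped Pointwise

section Haar

variable {E : Type*} [NormedAddCommGroup E] [NormedSpace ℝ E]

lemma smul_setOf_one_lt_norm {R : ℝ} (hR : 0 < R) :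
    R • {v : E | 1 < ‖v‖} = {v : E | R < ‖v‖} := by
  ext v
  rw [mem_smul_set_iff_inv_smul_mem₀ hR.ne']
  simp only [mem_ofPred_eq, norm_smul, norm_inv, norm_eq_abs, abs_of_pos hR, inv_mul_eq_div,
    one_lt_div hR]

variable [FiniteDimensional ℝ E] [MeasurableSpace E] [BorelSpace E]
  (μ : Measure E) [μ.IsAddHaarMeasure]

lemma setIntegral_norm_rpow_of_lt_norm (s : ℝ) {R : ℝ} (hR : 0 < R) :
    ∫ v in {v : E | R < ‖v‖}, ‖v‖ ^ s ∂μ =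
      R ^ ((finrank ℝ E : ℝ) + s) * ∫ v in {v : E | 1 < ‖v‖}, ‖v‖ ^ s ∂μ := by
  have h := Measure.setIntegral_comp_smul_of_pos μ (fun v : E => ‖v‖ ^ s) {v | 1 < ‖v‖} hR
  simp only [smul_setOf_one_lt_norm hR, norm_smul, norm_eq_abs, abs_of_pos hR,
    mul_rpow hR.le (norm_nonneg _), integral_const_mul, smul_eq_mul] at h
  rw [rpow_add hR, rpow_natCast, mul_assoc, h, ← mul_assoc,
    mul_inv_cancel₀ (pow_ne_zero _ hR.ne'), one_mul]

lemma integrableOn_norm_rpow_of_one_lt_norm {r : ℝ} (hr : (finrank ℝ E : ℝ) < r) :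
    IntegrableOn (fun v : E => ‖v‖ ^ (-r)) {v | 1 < ‖v‖} μ := by
  refine Integrable.mono' (((integrable_one_add_norm (μ := μ) hr).const_mul (2 ^ r)).restrict)
    (measurable_norm.pow_const _).aestronglyMeasurable ?_
  rw [ae_restrict_iff' (measurableSet_lt measurable_const measurable_norm)]
  refine Filter.Eventually.of_forall fun v (hv : 1 < ‖v‖) => ?_
  have hr0 : 0 < r := (Nat.cast_nonneg _).trans_lt hr
  rw [norm_eq_abs, abs_of_nonneg (by positivity)]
  calc ‖v‖ ^ (-r) ≤ ((1 + ‖v‖) / 2) ^ (-r) :=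
        rpow_le_rpow_of_nonpos (by positivity) (by linarith) (by linarith)
    _ = 2 ^ r * (1 + ‖v‖) ^ (-r) := by
        rw [div_rpow (by positivity) zero_le_two, rpow_neg zero_le_two, div_inv_eq_mul, mul_comm]

end Haar

section WeightedBound

variable {E : Type*} [NormedAddCommGroup E] {f : E → ℝ} {q N : ℝ}

lemma le_mul_one_add_norm_rpow_neg (hN : ∀ v, (1 + ‖v‖) ^ q * f v ≤ N) (v : E) :
    f v ≤ N * (1 + ‖v‖) ^ (-q) := by
  rw [rpow_neg (by positivity), ← div_eq_mul_inv, le_div_iff₀ (by positivity), mul_comm]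
  exact hN v

lemma norm_sq_mul_le_mul_rpow (hq : 0 ≤ q) (hf0 : ∀ v, 0 ≤ f v)
    (hN : ∀ v, (1 + ‖v‖) ^ q * f v ≤ N) {v : E} {a : ℝ} (ha : 0 < a) (hva : ‖v‖ ≤ a)
    (hav : a ≤ 1 + ‖v‖) : ‖v‖ ^ 2 * f v ≤ N * a ^ (2 - q) := by
  have hN0 : 0 ≤ N := (mul_nonneg (by positivity) (hf0 v)).trans (hN v)
  calc ‖v‖ ^ 2 * f v ≤ a ^ 2 * (N * a ^ (-q)) :=
        mul_le_mul (pow_le_pow_left₀ (norm_nonneg v) hva 2)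
          ((le_mul_one_add_norm_rpow_neg hN v).trans (mul_le_mul_of_nonneg_left
            (rpow_le_rpow_of_nonpos ha hav (by linarith)) hN0)) (hf0 v) (by positivity)
    _ = N * a ^ (2 - q) := by rw [sub_eq_add_neg, rpow_add ha, rpow_two]; ring

variable [NormedSpace ℝ E] [FiniteDimensional ℝ E] [MeasurableSpace E] [BorelSpace E]
  (μ : Measure E) [μ.IsAddHaarMeasure]

lemma integrable_norm_sq_mul (hf : AEStronglyMeasurable f μ) (hf0 : ∀ v, 0 ≤ f v)
    (hN : ∀ v, (1 + ‖v‖) ^ q * f v ≤ N) (hq : (finrank ℝ E : ℝ) + 2 < q) :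
    Integrable (fun v => ‖v‖ ^ 2 * f v) μ := by
  refine Integrable.mono'
    ((integrable_one_add_norm (μ := μ) (r := q - 2) (by linarith)).const_mul N)
    ((measurable_norm.pow_const 2).aestronglyMeasurable.mul hf) (Filter.Eventually.of_forall ?_)
  intro v
  rw [norm_eq_abs, abs_of_nonneg (mul_nonneg (by positivity) (hf0 v)), neg_sub]
  exact norm_sq_mul_le_mul_rpow (by linarith [(finrank ℝ E).cast_nonneg (α := ℝ)]) hf0 hN
    (by positivity) (by linarith) le_rfl

lemma integral_le_mul_integral_one_add_norm_rpow_neg (hf : Integrable f μ)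
    (hN : ∀ v, (1 + ‖v‖) ^ q * f v ≤ N) (hq : (finrank ℝ E : ℝ) < q) :
    ∫ v, f v ∂μ ≤ N * ∫ v, (1 + ‖v‖) ^ (-q) ∂μ := by
  rw [← integral_const_mul]
  exact integral_mono hf ((integrable_one_add_norm hq).const_mul N)
    (le_mul_one_add_norm_rpow_neg hN)

lemma integral_norm_sq_mul_le (hf : Integrable f μ) (hf0 : ∀ v, 0 ≤ f v)
    (hN : ∀ v, (1 + ‖v‖) ^ q * f v ≤ N) (hq : (finrank ℝ E : ℝ) + 2 < q) {R : ℝ} (hR : 1 ≤ R) :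
    ∫ v, ‖v‖ ^ 2 * f v ∂μ ≤ (∫ v, f v ∂μ) * R ^ 2 +
      N * (∫ v in {v : E | 1 < ‖v‖}, ‖v‖ ^ (2 - q) ∂μ) * R ^ ((finrank ℝ E : ℝ) + 2 - q) := by
  have hq0 : 0 ≤ q := by linarith [(finrank ℝ E).cast_nonneg (α := ℝ)]
  have hm2 := integrable_norm_sq_mul μ hf.aestronglyMeasurable hf0 hN hq
  set S := {v : E | R < ‖v‖}
  have hS : MeasurableSet S := measurableSet_lt measurable_const measurable_norm
  have hbulk : ∫ v in Sᶜ, ‖v‖ ^ 2 * f v ∂μ ≤ (∫ v, f v ∂μ) * R ^ 2 :=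
    calc ∫ v in Sᶜ, ‖v‖ ^ 2 * f v ∂μ ≤ ∫ v in Sᶜ, R ^ 2 * f v ∂μ := by
          refine setIntegral_mono_on hm2.integrableOn (hf.const_mul _).integrableOn hS.compl
            fun v (hv : ¬ R < ‖v‖) => ?_
          gcongr
          · exact hf0 v
          · exact not_lt.1 hv
      _ ≤ R ^ 2 * ∫ v, f v ∂μ := by
          rw [integral_const_mul]
          exact mul_le_mul_of_nonneg_left
            (setIntegral_le_integral hf (Filter.Eventually.of_forall hf0)) (by positivity)
      _ = (∫ v, f v ∂μ) * R ^ 2 := mul_comm _ _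
  have htail_int : IntegrableOn (fun v : E => ‖v‖ ^ (2 - q)) S μ := by
    have h := integrableOn_norm_rpow_of_one_lt_norm μ (r := q - 2) (by linarith)
    rw [neg_sub] at h
    exact h.mono_set fun v (hv : R < ‖v‖) => show 1 < ‖v‖ by linarith
  have htail : ∫ v in S, ‖v‖ ^ 2 * f v ∂μ ≤
      N * (∫ v in {v : E | 1 < ‖v‖}, ‖v‖ ^ (2 - q) ∂μ) * R ^ ((finrank ℝ E : ℝ) + 2 - q) :=
    calc ∫ v in S, ‖v‖ ^ 2 * f v ∂μ ≤ ∫ v in S, N * ‖v‖ ^ (2 - q) ∂μ :=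
          setIntegral_mono_on hm2.integrableOn (htail_int.const_mul N) hS
            fun v (hv : R < ‖v‖) => norm_sq_mul_le_mul_rpow hq0 hf0 hN (by linarith) le_rfl
              (by linarith)
      _ = _ := by
          rw [integral_const_mul, setIntegral_norm_rpow_of_lt_norm μ _ (by linarith),
            add_sub_assoc]
          ring
  rw [← integral_add_compl hS hm2]
  linarith

end WeightedBound

section InnerProduct

variable {E : Type*} [NormedAddCommGroup E] [InnerProductSpace ℝ E] [CompleteSpace E]
  [MeasurableSpace E]
  {μ : Measure E} {f : E → ℝ}

lemma integral_norm_sub_sq_mul (hf : Integrable f μ) (hfv : Integrable (fun v => f v • v) μ)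
    (hm2 : Integrable (fun v => ‖v‖ ^ 2 * f v) μ) {U : E}
    (hU : ∫ v, f v • v ∂μ = (∫ v, f v ∂μ) • U) :
    ∫ v, ‖v - U‖ ^ 2 * f v ∂μ = ∫ v, ‖v‖ ^ 2 * f v ∂μ - (∫ v, f v ∂μ) * ‖U‖ ^ 2 := by
  have hinner : Integrable (fun v => inner ℝ U (f v • v)) μ := hfv.const_inner U
  calc ∫ v, ‖v - U‖ ^ 2 * f v ∂μ
      = ∫ v, (‖v‖ ^ 2 * f v - 2 * inner ℝ U (f v • v) + ‖U‖ ^ 2 * f v) ∂μ := by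
        refine integral_congr_ae (Filter.Eventually.of_forall fun v => ?_)
        simp only [norm_sub_sq_real, real_inner_smul_right, real_inner_comm]
        ring
    _ = ∫ v, ‖v‖ ^ 2 * f v ∂μ - 2 * ∫ v, inner ℝ U (f v • v) ∂μ + ‖U‖ ^ 2 * ∫ v, f v ∂μ := by
        rw [integral_add (by exact hm2.sub (hinner.const_mul 2)) (hf.const_mul _),
          integral_sub hm2 (hinner.const_mul 2), integral_const_mul, integral_const_mul]
    _ = _ := by
        rw [integral_inner hfv, hU, real_inner_smul_right, real_inner_self_eq_norm_sq]
        ring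

lemma mul_add_norm_sq_le_integral_norm_sq_mul (hf0 : ∀ v, 0 ≤ f v) (hf : Integrable f μ)
    (hfv : Integrable (fun v => f v • v) μ) (hm2 : Integrable (fun v => ‖v‖ ^ 2 * f v) μ)
    {ρ T c : ℝ} {U : E} (hc : 1 ≤ c) (hρ : ρ = ∫ v, f v ∂μ) (hρpos : 0 < ρ)
    (hU : U = ρ⁻¹ • ∫ v, f v • v ∂μ) (hT : T = (c * ρ)⁻¹ * ∫ v, ‖v - U‖ ^ 2 * f v ∂μ) :
    ρ * (T + ‖U‖ ^ 2) ≤ ∫ v, ‖v‖ ^ 2 * f v ∂μ := by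
  have hmean : ∫ v, f v • v ∂μ = (∫ v, f v ∂μ) • U := by
    rw [hU, ← hρ, smul_smul, mul_inv_cancel₀ hρpos.ne', one_smul]
  have hvar := integral_norm_sub_sq_mul hf hfv hm2 hmean
  have hT0 : 0 ≤ T := hT ▸ mul_nonneg (by positivity)
    (integral_nonneg fun v => mul_nonneg (by positivity) (hf0 v))
  have hcT : c * ρ * T = ∫ v, ‖v - U‖ ^ 2 * f v ∂μ := by
    rw [hT]; field_simp
  rw [hvar, ← hρ] at hcT
  nlinarith [mul_nonneg (mul_nonneg (sub_nonneg.2 hc) hρpos.le) hT0]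

end InnerProduct

lemma mul_rpow_le_of_forall_le_mul_sq_add {ρ B A K p : ℝ} (hp : 1 < p) (hρ : 0 ≤ ρ)
    (hB : 0 ≤ B) (hK : 0 ≤ K) (hρA : ρ ≤ A)
    (h : ∀ R : ℝ, 1 ≤ R → ρ * B ≤ ρ * R ^ 2 + K * R ^ (2 - 2 * p)) :
    ρ * B ^ p ≤ 2 ^ p * (A + K) := by
  rcases le_or_gt B 2 with hB2 | hB2
  · calc ρ * B ^ p ≤ A * 2 ^ p :=
          mul_le_mul hρA (rpow_le_rpow hB hB2 (by linarith)) (by positivity) (hρ.trans hρA)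
      _ ≤ (A + K) * 2 ^ p := by gcongr; linarith
      _ = 2 ^ p * (A + K) := mul_comm _ _
  · set t := B / 2 with ht
    have ht1 : 1 < t := by rw [ht]; linarith
    have ht0 : 0 < t := one_pos.trans ht1
    have hbal : ρ * t ≤ K * t ^ (1 - p) := by
      have h' := h √t (one_le_sqrt.2 ht1.le)
      rw [sq_sqrt ht0.le, sqrt_eq_rpow, ← rpow_mul ht0.le,
        show 1 / 2 * (2 - 2 * p) = 1 - p by ring, show B = 2 * t by rw [ht]; ring] at h'
      linarith
    have htp : ρ * t ^ p ≤ K :=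
      calc ρ * t ^ p = ρ * t * t ^ (p - 1) := by
            rw [mul_assoc, ← rpow_one_add' ht0.le (by linarith), add_sub_cancel]
        _ ≤ K * t ^ (1 - p) * t ^ (p - 1) := by gcongr
        _ = K := by rw [mul_assoc, ← rpow_add ht0]; simp
    calc ρ * B ^ p = 2 ^ p * (ρ * t ^ p) := by
          rw [show B = 2 * t by rw [ht]; ring, mul_rpow zero_le_two ht0.le]; ring
      _ ≤ 2 ^ p * (A + K) := by gcongr; linarith

/-- for q > 5 there is a constant C_q, depending only on q, with
ρ_f (T_f + |U_f|²)^{(q-3)/2} ≤ C_q ‖f‖_q. -/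
theorem lem_temp_ii (q : ℝ) (hq : 5 < q) :
    ∃ C : ℝ, 0 < C ∧
      ∀ (f : E3 → ℝ), Measurable f → (∀ v, 0 ≤ f v) →
        Integrable f →
        ∀ N : ℝ, (∀ v, (1 + ‖v‖) ^ q * f v ≤ N) →
        ∀ (ρf : ℝ) (Uf : E3) (Tf : ℝ),
          ρf = ∫ v, f v →
          Integrable (fun v => f v • v) →
          Uf = ρf⁻¹ • ∫ v, f v • v →
          Integrable (fun v => ‖v - Uf‖ ^ 2 * f v) →
          Tf = (3 * ρf)⁻¹ * ∫ v, ‖v - Uf‖ ^ 2 * f v →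
          0 < ρf →
          ρf * (Tf + ‖Uf‖ ^ 2) ^ ((q - 3) / 2) ≤ C * N := by
  have hd : (finrank ℝ E3 : ℝ) = 3 := by rw [finrank_euclideanSpace_fin]; norm_num
  set c₀ := ∫ v : E3, (1 + ‖v‖) ^ (-q)
  set J := ∫ v in {v : E3 | 1 < ‖v‖}, ‖v‖ ^ (2 - q)
  have hc₀ : 0 ≤ c₀ := integral_nonneg fun v => by positivity
  have hJ : 0 ≤ J :=
    setIntegral_nonneg (measurableSet_lt measurable_const measurable_norm) fun v _ => by positivity
  refine ⟨2 ^ ((q - 3) / 2) * (c₀ + J + 1), mul_pos (by positivity) (by linarith), ?_⟩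
  intro f _ hf0 hf N hN ρf Uf Tf hρ hfv hU _ hT hρpos
  have hN0 : 0 ≤ N := (mul_nonneg (by positivity) (hf0 0)).trans (hN 0)
  have hm2 := integrable_norm_sq_mul volume hf.aestronglyMeasurable hf0 hN (by linarith)
  have hT0 : 0 ≤ Tf := hT ▸ mul_nonneg (by positivity)
    (integral_nonneg fun v => mul_nonneg (by positivity) (hf0 v))
  have henergy :=
    mul_add_norm_sq_le_integral_norm_sq_mul hf0 hf hfv hm2 (by norm_num) hρ hρpos hU hT
  calc ρf * (Tf + ‖Uf‖ ^ 2) ^ ((q - 3) / 2) ≤ 2 ^ ((q - 3) / 2) * (N * c₀ + N * J) :=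
        mul_rpow_le_of_forall_le_mul_sq_add (by linarith) hρpos.le (add_nonneg hT0 (sq_nonneg _))
          (by positivity)
          (hρ ▸ integral_le_mul_integral_one_add_norm_rpow_neg volume hf hN (by linarith))
          fun R hR => henergy.trans <| by
            have h := integral_norm_sq_mul_le volume hf hf0 hN (by linarith) hR
            rw [← hρ, hd, show (3 : ℝ) + 2 - q = 2 - 2 * ((q - 3) / 2) by ring] at h
            linarith
    _ = 2 ^ ((q - 3) / 2) * (c₀ + J) * N := by ring
    _ ≤ 2 ^ ((q - 3) / 2) * (c₀ + J + 1) * N :=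
        mul_le_mul_of_nonneg_right (mul_le_mul_of_nonneg_left (by linarith) (by positivity)) hN0
end

section
/- Let q > 1 and let f : ℝ³ → [0,∞) be measurable with ‖f‖_q := sup_{v∈ℝ³} (1+|v|)^q f(v) < ∞, ρ_f > 0, and T_f > 0. Then there exists a constant C_q > 0, depending only on q, such that ρ_f |U_f|^{q+3} ((T_f + |U_f|²) T_f)^{-3/2} ≤ C_q ‖f‖_q. -/
open MeasureTheory Real

/-!
Write `u = ‖U‖`, so that `∫ ‖v - U‖² f = 3ρT` and `f v ≤ N (1 + ‖v‖)^(-q)`.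

If `u² ≥ 24 T`, Chebyshev's inequality puts half of the mass in the ball `B(U, √(6T))`, on which
`‖v‖ ≥ u / 2`; hence `ρ u^q ≲ N T^(3/2)`, and `((T + u²) T)^(-3/2) ≤ (u² T)^(-3/2)`.

If `u² < 24 T`, the momentum gives `ρ u ≤ ∫ ‖v‖ f`, and for `a ≥ 2u`, splitting into
`‖v‖ ≤ u/2`, `u/2 < ‖v‖ ≤ a` and `‖v‖ > a`,
`‖v‖ f(v) ≤ (u/2) f(v) + N a³ ‖v‖^(-(q+2)) 1{‖v‖ > u/2} + (4/a) ‖v - U‖² f(v)`.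
Since `q + 2 > 3`, the middle term integrates to `≲ N a³ u^(1-q)`; the choice `a = 48 T / u` makes
the last term `ρ u / 4`, so `ρ u^(q+3) ≲ N T³`, and `((T + u²) T)^(-3/2) ≤ T^(-3)`.
-/

open Set Metric Module

noncomputable def tailKernel {E : Type*} [NormedAddCommGroup E] (r p : ℝ) (x : E) : ℝ :=
  (Ioi r).indicator (fun s => s ^ (-p)) ‖x‖

theorem measureReal_ball_pos {X : Type*} [PseudoMetricSpace X] [ProperSpace X] [MeasurableSpace X]
    (μ : Measure X) [μ.IsOpenPosMeasure] [IsFiniteMeasureOnCompacts μ] (x : X) {r : ℝ}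
    (hr : 0 < r) : 0 < μ.real (ball x r) :=
  ENNReal.toReal_pos (measure_ball_pos μ x hr).ne' measure_ball_lt_top.ne

section TailKernel

variable {E : Type*} [NormedAddCommGroup E] [NormedSpace ℝ E] [FiniteDimensional ℝ E]
  [Nontrivial E]

theorem radial_tailKernel {r : ℝ} (hr : 0 ≤ r) (p : ℝ) :
    (fun y : ℝ => y ^ (finrank ℝ E - 1) • (Ioi r).indicator (fun s => s ^ (-p)) y) =
      (Ioi r).indicator (fun y => y ^ ((finrank ℝ E : ℝ) - 1 - p)) := by
  have hd : 1 ≤ finrank ℝ E := finrank_pos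
  ext y
  by_cases hy : y ∈ Ioi r
  · simp only [indicator_of_mem hy, smul_eq_mul]
    rw [← rpow_natCast, ← rpow_add (hr.trans_lt hy), Nat.cast_sub hd, Nat.cast_one]
    ring_nf
  · simp [indicator_of_notMem hy]

variable [MeasurableSpace E] [BorelSpace E] (μ : Measure E) [μ.IsAddHaarMeasure]

theorem integrable_tailKernel {r p : ℝ} (hr : 0 < r) (hp : (finrank ℝ E : ℝ) < p) :
    Integrable (tailKernel r p) μ := by
  unfold tailKernel
  rw [integrable_fun_norm_addHaar μ, radial_tailKernel hr.le,
    integrableOn_indicator_iff measurableSet_Ioi]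
  exact (integrableOn_Ioi_rpow_of_lt (by linarith) hr).mono_set inter_subset_left

theorem integral_tailKernel {r p : ℝ} (hr : 0 < r) (hp : (finrank ℝ E : ℝ) < p) :
    ∫ x, tailKernel r p x ∂μ =
      finrank ℝ E * μ.real (ball 0 1) * (r ^ ((finrank ℝ E : ℝ) - p) / (p - finrank ℝ E)) := by
  unfold tailKernel
  rw [integral_fun_norm_addHaar μ, radial_tailKernel hr.le, setIntegral_indicator measurableSet_Ioi,
    inter_eq_right.mpr (Ioi_subset_Ioi hr.le), integral_Ioi_rpow_of_lt (by linarith) hr,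
    nsmul_eq_mul, smul_eq_mul, show (finrank ℝ E : ℝ) - 1 - p + 1 = finrank ℝ E - p by ring,
    ← neg_sub p, neg_div_neg_eq, mul_assoc]

end TailKernel

section Moments

variable {E : Type*} [NormedAddCommGroup E] [MeasurableSpace E] {μ : Measure E} {f : E → ℝ}

theorem integral_le_moment_div_add_setIntegral_closedBall [OpensMeasurableSpace E]
    {U : E} {R : ℝ} (hR : 0 < R) (hf0 : ∀ v, 0 ≤ f v) (hfi : Integrable f μ)
    (hI2 : Integrable (fun v => ‖v - U‖ ^ 2 * f v) μ) :
    ∫ v, f v ∂μ ≤ (∫ v, ‖v - U‖ ^ 2 * f v ∂μ) / R ^ 2 + ∫ v in closedBall U R, f v ∂μ := by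
  rw [← integral_indicator measurableSet_closedBall, ← integral_div,
    ← integral_add (hI2.div_const _) (hfi.indicator measurableSet_closedBall)]
  refine integral_mono hfi ((hI2.div_const _).add (hfi.indicator measurableSet_closedBall))
    fun v => ?_
  by_cases hv : v ∈ closedBall U R
  · rw [indicator_of_mem hv]
    have := hf0 v
    have : 0 ≤ ‖v - U‖ ^ 2 * f v / R ^ 2 := by positivity
    linarith
  · have hRv : R < ‖v - U‖ := by simpa [dist_eq_norm] using hv
    rw [indicator_of_notMem hv, add_zero, le_div_iff₀ (by positivity)]
    nlinarith [hf0 v, pow_le_pow_left₀ hR.le hRv.le 2]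

theorem mul_norm_le_integral_norm_mul [NormedSpace ℝ E] {ρ : ℝ} {U : E}
    (hf0 : ∀ v, 0 ≤ f v) (hρ : 0 ≤ ρ) (hmom : ∫ v, f v • v ∂μ = ρ • U) :
    ρ * ‖U‖ ≤ ∫ v, ‖v‖ * f v ∂μ := by
  calc ρ * ‖U‖ = ‖∫ v, f v • v ∂μ‖ := by rw [hmom, norm_smul, norm_of_nonneg hρ]
    _ ≤ ∫ v, ‖f v • v‖ ∂μ := norm_integral_le_integral_norm _
    _ = ∫ v, ‖v‖ * f v ∂μ := by simp only [norm_smul, norm_of_nonneg (hf0 _), mul_comm]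

end Moments

section WeightedDecay

variable {E : Type*} [NormedAddCommGroup E] {f : E → ℝ} {q N : ℝ}

theorem nonneg_of_forall_one_add_norm_rpow_mul_le (hf0 : ∀ v, 0 ≤ f v)
    (hN : ∀ v, (1 + ‖v‖) ^ q * f v ≤ N) : 0 ≤ N :=
  (mul_nonneg (by positivity) (hf0 0)).trans (hN 0)

theorem rpow_mul_le_of_le_norm (hq : 0 ≤ q) (hf0 : ∀ v, 0 ≤ f v)
    (hN : ∀ v, (1 + ‖v‖) ^ q * f v ≤ N) {r : ℝ} {v : E} (hr : 0 ≤ r) (hrv : r ≤ ‖v‖) :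
    r ^ q * f v ≤ N :=
  (mul_le_mul_of_nonneg_right (rpow_le_rpow hr (by linarith) hq) (hf0 v)).trans (hN v)

theorem norm_mul_le_add_tailKernel [NormedSpace ℝ E] [FiniteDimensional ℝ E] [Nontrivial E]
    (hq : 0 ≤ q) (hf0 : ∀ v, 0 ≤ f v) (hN : ∀ v, (1 + ‖v‖) ^ q * f v ≤ N) {U : E} {a : ℝ}
    (ha : 0 < a) (hUa : 2 * ‖U‖ ≤ a) (v : E) :
    ‖v‖ * f v ≤ ‖U‖ / 2 * f v + N * a ^ finrank ℝ E *
      tailKernel (‖U‖ / 2) (q + finrank ℝ E - 1) v + 4 / a * (‖v - U‖ ^ 2 * f v) := by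
  set d := finrank ℝ E
  set K := tailKernel (‖U‖ / 2) (q + d - 1) v with hK
  have hfv := hf0 v
  have hN0 : 0 ≤ N := nonneg_of_forall_one_add_norm_rpow_mul_le hf0 hN
  have hr : 0 ≤ ‖U‖ / 2 := by positivity
  have hK0 : 0 ≤ K := indicator_nonneg (fun s hs => rpow_nonneg (hr.trans hs.out.le) _) _
  have hslow : 0 ≤ ‖U‖ / 2 * f v := by positivity
  have htail : 0 ≤ 4 / a * (‖v - U‖ ^ 2 * f v) := by positivity
  have hmid : 0 ≤ N * a ^ d * K := by positivity
  rcases le_or_gt ‖v‖ (‖U‖ / 2) with hv | hv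
  · nlinarith [mul_le_mul_of_nonneg_right hv hfv]
  rcases le_or_gt ‖v‖ a with hva | hva
  · have hv0 : 0 < ‖v‖ := hr.trans_lt hv
    have hsplit : ‖v‖ * f v = ‖v‖ ^ d * K * (‖v‖ ^ q * f v) := by
      rw [hK, tailKernel, indicator_of_mem (show ‖v‖ ∈ Ioi (‖U‖ / 2) from hv), ← rpow_natCast,
        ← rpow_add hv0, ← mul_assoc, ← rpow_add hv0, show (d : ℝ) + -(q + d - 1) + q = 1 by ring,
        rpow_one]
    have : ‖v‖ * f v ≤ N * a ^ d * K := by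
      rw [hsplit, mul_comm N, mul_right_comm]
      gcongr
      exact rpow_mul_le_of_le_norm hq hf0 hN (norm_nonneg v) le_rfl
    linarith
  · have hvU : ‖v‖ ≤ 2 * ‖v - U‖ := by linarith [norm_sub_norm_le v U]
    have : ‖v‖ * f v ≤ 4 / a * (‖v - U‖ ^ 2 * f v) := by
      rw [div_mul_eq_mul_div, le_div_iff₀ ha]
      nlinarith [mul_le_mul_of_nonneg_right (mul_le_mul hvU hvU (norm_nonneg v) (by positivity))
        hfv, mul_le_mul_of_nonneg_right (mul_le_mul_of_nonneg_left hva.le (norm_nonneg v)) hfv]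
    linarith

end WeightedDecay

section Estimates

variable {E : Type*} [NormedAddCommGroup E] [NormedSpace ℝ E] [FiniteDimensional ℝ E]
  [MeasurableSpace E] [BorelSpace E] {μ : Measure E} [μ.IsAddHaarMeasure] {f : E → ℝ} {q N : ℝ}

theorem rpow_mul_integral_le_of_concentrated (hq : 0 ≤ q) (hf0 : ∀ v, 0 ≤ f v)
    (hfi : Integrable f μ) (hN : ∀ v, (1 + ‖v‖) ^ q * f v ≤ N) {U : E}
    (hI2 : Integrable (fun v => ‖v - U‖ ^ 2 * f v) μ) {R : ℝ} (hR : 0 < R) (hRU : 2 * R ≤ ‖U‖)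
    (hM : 2 * ∫ v, ‖v - U‖ ^ 2 * f v ∂μ ≤ R ^ 2 * ∫ v, f v ∂μ) :
    (‖U‖ / 2) ^ q * ∫ v, f v ∂μ ≤ 2 * N * μ.real (ball 0 1) * R ^ finrank ℝ E := by
  have hball : (‖U‖ / 2) ^ q * ∫ v in closedBall U R, f v ∂μ ≤
      N * (R ^ finrank ℝ E * μ.real (ball 0 1)) := by
    rw [← integral_const_mul, ← Measure.addHaar_real_closedBall μ U hR.le, mul_comm N,
      ← smul_eq_mul, ← setIntegral_const]
    refine setIntegral_mono_on (hfi.integrableOn.const_mul _)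
      (integrableOn_const measure_closedBall_lt_top.ne) measurableSet_closedBall fun v hv => ?_
    rw [mem_closedBall_iff_norm] at hv
    exact rpow_mul_le_of_le_norm hq hf0 hN (by positivity)
      (by linarith [norm_sub_norm_le U v, norm_sub_rev U v])
  have hcheb := integral_le_moment_div_add_setIntegral_closedBall (μ := μ) hR hf0 hfi hI2
  have hmoment : (∫ v, ‖v - U‖ ^ 2 * f v ∂μ) / R ^ 2 ≤ (∫ v, f v ∂μ) / 2 := by
    rw [div_le_iff₀ (by positivity)]; linarith
  have hhalf : ∫ v, f v ∂μ ≤ 2 * ∫ v in closedBall U R, f v ∂μ := by linarith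
  calc (‖U‖ / 2) ^ q * ∫ v, f v ∂μ ≤ (‖U‖ / 2) ^ q * (2 * ∫ v in closedBall U R, f v ∂μ) := by
        gcongr
    _ ≤ 2 * (N * (R ^ finrank ℝ E * μ.real (ball 0 1))) := by linarith
    _ = 2 * N * μ.real (ball 0 1) * R ^ finrank ℝ E := by ring

theorem integral_norm_mul_le [Nontrivial E] (hq : 1 < q) (hf0 : ∀ v, 0 ≤ f v)
    (hfi : Integrable f μ) (hN : ∀ v, (1 + ‖v‖) ^ q * f v ≤ N) {U : E}
    (hI1 : Integrable (fun v => ‖v‖ * f v) μ) (hI2 : Integrable (fun v => ‖v - U‖ ^ 2 * f v) μ)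
    (hU : 0 < ‖U‖) {a : ℝ} (hUa : 2 * ‖U‖ ≤ a) :
    ∫ v, ‖v‖ * f v ∂μ ≤ ‖U‖ / 2 * ∫ v, f v ∂μ + N * a ^ finrank ℝ E *
      (finrank ℝ E * μ.real (ball 0 1) * ((‖U‖ / 2) ^ (1 - q) / (q - 1))) +
      4 / a * ∫ v, ‖v - U‖ ^ 2 * f v ∂μ := by
  have hK := integrable_tailKernel μ (half_pos hU) (p := q + finrank ℝ E - 1) (by linarith)
  have hKval := integral_tailKernel μ (half_pos hU) (p := q + finrank ℝ E - 1) (by linarith)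
  rw [show (finrank ℝ E : ℝ) - (q + finrank ℝ E - 1) = 1 - q by ring,
    show q + finrank ℝ E - 1 - finrank ℝ E = q - 1 by ring] at hKval
  have hsum : Integrable (fun v => ‖U‖ / 2 * f v + N * a ^ finrank ℝ E *
      tailKernel (‖U‖ / 2) (q + finrank ℝ E - 1) v) μ := (hfi.const_mul _).add (hK.const_mul _)
  calc ∫ v, ‖v‖ * f v ∂μ ≤ ∫ v, (‖U‖ / 2 * f v + N * a ^ finrank ℝ E *
        tailKernel (‖U‖ / 2) (q + finrank ℝ E - 1) v + 4 / a * (‖v - U‖ ^ 2 * f v)) ∂μ :=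
      integral_mono hI1 (hsum.add (hI2.const_mul _))
        (norm_mul_le_add_tailKernel (by linarith) hf0 hN (by linarith) hUa)
    _ = _ := by
      rw [integral_add hsum (hI2.const_mul _),
        integral_add (hfi.const_mul _) (hK.const_mul _), integral_const_mul, integral_const_mul,
        integral_const_mul, hKval]

end Estimates

theorem mul_rpow_neg_three_halves_le {X Y K t : ℝ} (ht : 0 < t) (htX : t ^ 2 ≤ X) (hY : 0 ≤ Y)
    (hYK : Y ≤ K * t ^ 3) : Y * X ^ (-(3 : ℝ) / 2) ≤ K := by
  have hX : X ^ (-(3 : ℝ) / 2) ≤ (t ^ 3)⁻¹ := by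
    calc X ^ (-(3 : ℝ) / 2) ≤ (t ^ 2) ^ (-(3 : ℝ) / 2) :=
          rpow_le_rpow_of_nonpos (by positivity) htX (by norm_num)
      _ = (t ^ 3)⁻¹ := by
          rw [← rpow_natCast, ← rpow_mul ht.le, ← rpow_natCast, ← rpow_neg ht.le]
          norm_num
  calc Y * X ^ (-(3 : ℝ) / 2) ≤ K * t ^ 3 * (t ^ 3)⁻¹ :=
        mul_le_mul hYK hX (rpow_nonneg ((sq_nonneg t).trans htX) _) (hY.trans hYK)
    _ = K := by field_simp

theorem finrank_E3 : finrank ℝ E3 = 3 := finrank_euclideanSpace_fin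

section ThreeDimensional

variable {f : E3 → ℝ} {q N ρ T : ℝ} {U : E3}

theorem mul_rpow_le_of_high_mach (hq : 0 ≤ q) (hf0 : ∀ v, 0 ≤ f v) (hfi : Integrable f)
    (hN : ∀ v, (1 + ‖v‖) ^ q * f v ≤ N) (hI2 : Integrable (fun v => ‖v - U‖ ^ 2 * f v))
    (hρ : ∫ v, f v = ρ) (hM : ∫ v, ‖v - U‖ ^ 2 * f v = 3 * ρ * T) (hT : 0 < T)
    (hmach : 24 * T ≤ ‖U‖ ^ 2) :
    ρ * ‖U‖ ^ (q + 3) * ((T + ‖U‖ ^ 2) * T) ^ (-(3 : ℝ) / 2) ≤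
      2 ^ (q + 1) * √6 ^ 3 * volume.real (ball (0 : E3) 1) * N := by
  set u := ‖U‖
  set R := √6 * √T
  have hR : 0 < R := by positivity
  have hR2 : R ^ 2 = 6 * T := by rw [mul_pow, sq_sqrt (by norm_num), sq_sqrt hT.le]
  have hu : 0 < u := by nlinarith [norm_nonneg U]
  have hconc := rpow_mul_integral_le_of_concentrated (μ := volume) hq hf0 hfi hN hI2 hR
    (by nlinarith [norm_nonneg U]) (by rw [hM, hρ, hR2]; linarith)
  rw [hρ, finrank_E3] at hconc
  have hρ0 : 0 ≤ ρ := hρ ▸ integral_nonneg hf0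
  refine mul_rpow_neg_three_halves_le (t := u * √T) (by positivity)
    (by rw [mul_pow, sq_sqrt hT.le]; nlinarith) (by positivity) ?_
  calc ρ * u ^ (q + 3) = 2 ^ q * ((u / 2) ^ q * ρ) * u ^ 3 := by
        rw [rpow_add hu, div_rpow hu.le zero_le_two, rpow_ofNat]
        field_simp
    _ ≤ 2 ^ q * (2 * N * volume.real (ball (0 : E3) 1) * R ^ 3) * u ^ 3 := by gcongr
    _ = 2 ^ (q + 1) * √6 ^ 3 * volume.real (ball (0 : E3) 1) * N * (u * √T) ^ 3 := by
        rw [rpow_add_one two_ne_zero]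
        ring

theorem mul_rpow_le_of_low_mach (hq : 1 < q) (hf0 : ∀ v, 0 ≤ f v) (hfi : Integrable f)
    (hN : ∀ v, (1 + ‖v‖) ^ q * f v ≤ N) (hI1 : Integrable (fun v => f v • v))
    (hI2 : Integrable (fun v => ‖v - U‖ ^ 2 * f v)) (hρ : ∫ v, f v = ρ)
    (hmom : ∫ v, f v • v = ρ • U) (hM : ∫ v, ‖v - U‖ ^ 2 * f v = 3 * ρ * T) (hT : 0 < T)
    (hmach : ‖U‖ ^ 2 < 24 * T) :
    ρ * ‖U‖ ^ (q + 3) * ((T + ‖U‖ ^ 2) * T) ^ (-(3 : ℝ) / 2) ≤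
      12 * 48 ^ 3 * 2 ^ (q - 1) / (q - 1) * volume.real (ball (0 : E3) 1) * N := by
  have hρ0 : 0 ≤ ρ := hρ ▸ integral_nonneg hf0
  have hN0 := nonneg_of_forall_one_add_norm_rpow_mul_le hf0 hN
  rcases (norm_nonneg U).eq_or_lt with hu | hu
  · rw [← hu, zero_rpow (by linarith), mul_zero, zero_mul]
    have := measureReal_ball_pos volume (0 : E3) one_pos
    have : 0 < q - 1 := by linarith
    positivity
  have hnorm : Integrable (fun v => ‖v‖ * f v) := by
    refine hI1.norm.congr (.of_forall fun v => ?_)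
    simp only [norm_smul, norm_of_nonneg (hf0 v), mul_comm]
  have hbound := integral_norm_mul_le (μ := volume) hq hf0 hfi hN hnorm hI2 hu
    (a := 48 * T / ‖U‖) (by rw [le_div_iff₀ hu]; nlinarith)
  rw [hρ, hM, finrank_E3] at hbound
  have hfirst := mul_norm_le_integral_norm_mul hf0 hρ0 hmom
  set u := ‖U‖
  set κ := volume.real (ball (0 : E3) 1)
  have htail : 4 / (48 * T / u) * (3 * ρ * T) = ρ * u / 4 := by field_simp; ring
  have hkey : ρ * u ≤ 4 * (N * (48 * T / u) ^ 3 * (3 * κ * ((u / 2) ^ (1 - q) / (q - 1)))) := by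
    push_cast at hbound; linarith
  have hpow : (u / 2) ^ (1 - q) * u ^ (q - 1) = 2 ^ (q - 1) := by
    rw [div_rpow hu.le zero_le_two, div_mul_eq_mul_div, ← rpow_add hu,
      show 1 - q + (q - 1) = 0 by ring, rpow_zero, one_div, ← rpow_neg zero_le_two, neg_sub]
  refine mul_rpow_neg_three_halves_le hT (by nlinarith) (by positivity) ?_
  calc ρ * u ^ (q + 3) = ρ * u * u ^ (q - 1) * u ^ 3 := by
        rw [show q + 3 = 1 + (q - 1) + 3 by ring, rpow_add hu, rpow_add hu, rpow_one, rpow_ofNat]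
        ring
    _ ≤ 4 * (N * (48 * T / u) ^ 3 * (3 * κ * ((u / 2) ^ (1 - q) / (q - 1)))) * u ^ (q - 1) *
          u ^ 3 := by gcongr
    _ = 12 * 48 ^ 3 * ((u / 2) ^ (1 - q) * u ^ (q - 1)) / (q - 1) * κ * N * T ^ 3 := by
        field_simp
        ring
    _ = 12 * 48 ^ 3 * 2 ^ (q - 1) / (q - 1) * κ * N * T ^ 3 := by rw [hpow]

end ThreeDimensional

/-- for q > 1 there is a constant C_q, depending only on q, with
ρ_f |U_f|^{q+3} ((T_f + |U_f|²) T_f)^{-3/2} ≤ C_q ‖f‖_q. -/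
theorem lem_temp_iii (q : ℝ) (hq : 1 < q) :
    ∃ C : ℝ, 0 < C ∧
      ∀ (f : E3 → ℝ), Measurable f → (∀ v, 0 ≤ f v) →
        Integrable f →
        ∀ N : ℝ, (∀ v, (1 + ‖v‖) ^ q * f v ≤ N) →
        ∀ (ρf : ℝ) (Uf : E3) (Tf : ℝ),
          ρf = ∫ v, f v →
          Integrable (fun v => f v • v) →
          Uf = ρf⁻¹ • ∫ v, f v • v →
          Integrable (fun v => ‖v - Uf‖ ^ 2 * f v) →
          Tf = (3 * ρf)⁻¹ * ∫ v, ‖v - Uf‖ ^ 2 * f v →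
          0 < ρf → 0 < Tf →
          ρf * ‖Uf‖ ^ (q + 3) * ((Tf + ‖Uf‖ ^ 2) * Tf) ^ (-(3 : ℝ) / 2) ≤ C * N := by
  have hκ := measureReal_ball_pos volume (0 : E3) one_pos
  have hC₁ : 0 < 2 ^ (q + 1) * √6 ^ 3 * volume.real (ball (0 : E3) 1) := by positivity
  have hC₂ : 0 ≤ 12 * 48 ^ 3 * 2 ^ (q - 1) / (q - 1) * volume.real (ball (0 : E3) 1) :=
    mul_nonneg (div_nonneg (by positivity) (by linarith)) hκ.le
  refine ⟨_, add_pos_of_pos_of_nonneg hC₁ hC₂, ?_⟩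
  rintro f - hf0 hfi N hN ρ U T hρ hI1 hU hI2 hT hρ0 hT0
  have hN0 := nonneg_of_forall_one_add_norm_rpow_mul_le hf0 hN
  have hmom : ∫ v, f v • v = ρ • U := by rw [hU, smul_smul, mul_inv_cancel₀ hρ0.ne', one_smul]
  have hM : ∫ v, ‖v - U‖ ^ 2 * f v = 3 * ρ * T := by rw [hT]; field_simp
  rcases le_or_gt (24 * T) (‖U‖ ^ 2) with hmach | hmach
  · exact (mul_rpow_le_of_high_mach (by linarith) hf0 hfi hN hI2 hρ.symm hM hT0 hmach).trans
      (mul_le_mul_of_nonneg_right (le_add_of_nonneg_right hC₂) hN0)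
  · exact (mul_rpow_le_of_low_mach hq hf0 hfi hN hI1 hI2 hρ.symm hmom hM hT0 hmach).trans
      (mul_le_mul_of_nonneg_right (le_add_of_nonneg_left hC₁.le) hN0)
end

section
/- Let q > 5 and c₁, c₂ > 0, and let f : ℝ³ → [0,∞) be measurable with ‖f‖_q := sup_{v∈ℝ³} (1+|v|)^q f(v) < ∞, and suppose ρ_f + |U_f| + T_f < c₁ and ρ_f, T_f > c₂. Then there exists a constant C > 0, depending only on q, c₁, c₂, such that sup_{v∈ℝ³} (1+|v|)^q (|v - U_f| / T_f) M(f)(v) ≤ C ‖f‖_q, where M(f)(v) := ρ_f (2πT_f)^{-3/2} exp(-|v-U_f|²/(2T_f)). -/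
open MeasureTheory Real

set_option maxHeartbeats 1000000 in
/-- under the bounds ρ_f + |U_f| + T_f < c₁ and ρ_f, T_f > c₂,
the weighted norm of (|v - U_f|/T_f) M(f)(v) is controlled by ‖f‖_q, with a
constant depending only on q, c₁, c₂. -/
theorem U_derivative_weight_bound (q c₁ c₂ : ℝ) (hq : 5 < q)
    (hc₁ : 0 < c₁) (hc₂ : 0 < c₂) :
    ∃ C : ℝ, 0 < C ∧
      ∀ (f : E3 → ℝ), Measurable f → (∀ v, 0 ≤ f v) →
        Integrable f →
        ∀ N : ℝ, (∀ v, (1 + ‖v‖) ^ q * f v ≤ N) →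
        ∀ (ρf : ℝ) (Uf : E3) (Tf : ℝ),
          ρf = ∫ v, f v →
          Integrable (fun v => f v • v) →
          Uf = ρf⁻¹ • ∫ v, f v • v →
          Integrable (fun v => ‖v - Uf‖ ^ 2 * f v) →
          Tf = (3 * ρf)⁻¹ * ∫ v, ‖v - Uf‖ ^ 2 * f v →
          ρf + ‖Uf‖ + Tf < c₁ → c₂ < ρf → c₂ < Tf →
          ∀ v : E3,
            (1 + ‖v‖) ^ q * ((‖v - Uf‖ / Tf) *
              (ρf * (2 * π * Tf) ^ (-(3 : ℝ) / 2) *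
                Real.exp (-‖v - Uf‖ ^ 2 / (2 * Tf)))) ≤ C * N := by
  have hqpos : (0 : ℝ) < q := by linarith
  have hKint : Integrable (fun v : E3 => (1 + ‖v‖) ^ (-q)) := by
    apply integrable_one_add_norm
    simp only [finrank_euclideanSpace, Fintype.card_fin]
    norm_num; linarith
  set K : ℝ := ∫ v : E3, (1 + ‖v‖) ^ (-q) with hK
  have hKnn : 0 ≤ K := by
    apply integral_nonneg
    intro v
    positivity
  set B : ℝ := (1 + c₁) ^ q * (c₁ / c₂) * (2 * π * c₂) ^ (-(3 : ℝ) / 2) *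
      Real.exp ((q + 1) ^ 2 * c₁ / 2) with hB
  have hBpos : 0 < B := by
    have hpi := Real.pi_pos
    positivity
  refine ⟨B * (K + 1) / c₂, by positivity, ?_⟩
  intro f hf hfnn hfint N hN ρf Uf Tf hρ hint1 hU hint2 hT hlt hρc hTc v
  -- basic bounds on macroscopic quantities
  have hUnn : (0 : ℝ) ≤ ‖Uf‖ := norm_nonneg _
  have hρpos : 0 < ρf := lt_trans hc₂ hρc
  have hTpos : 0 < Tf := lt_trans hc₂ hTc
  have hρc₁ : ρf ≤ c₁ := by linarith
  have hTc₁ : Tf ≤ c₁ := by linarith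
  have hUc₁ : ‖Uf‖ ≤ c₁ := by linarith
  -- N is bounded below: c₂ < ρf ≤ N * K
  have hNnn : 0 ≤ N := le_trans (by have := hfnn 0; positivity) (hN 0)
  have hfb : ∀ w : E3, f w ≤ N * (1 + ‖w‖) ^ (-q) := by
    intro w
    have h1 : (0 : ℝ) < 1 + ‖w‖ := by positivity
    have h2 : (0 : ℝ) < (1 + ‖w‖) ^ q := Real.rpow_pos_of_pos h1 q
    rw [Real.rpow_neg h1.le]
    have hc : f w = ((1 + ‖w‖) ^ q * f w) * ((1 + ‖w‖) ^ q)⁻¹ := by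
      field_simp
    rw [hc]
    exact mul_le_mul_of_nonneg_right (hN w) (by positivity)
  have hρN : ρf ≤ N * K := by
    rw [hρ, hK, ← integral_const_mul]
    exact integral_mono hfint (hKint.const_mul N) hfb
  have hc₂NK : c₂ ≤ N * (K + 1) := by
    have : N * K ≤ N * (K + 1) := by nlinarith
    linarith
  -- pointwise bound
  set r : ℝ := ‖v - Uf‖ with hr
  have hrnn : 0 ≤ r := norm_nonneg _
  have hexp : -(3 : ℝ) / 2 ≤ 0 := by norm_num
  have hpi := Real.pi_pos
  -- bound the weight
  have hw : (1 + ‖v‖) ^ q ≤ (1 + c₁) ^ q * Real.exp (q * r) := by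
    have h1 : 1 + ‖v‖ ≤ (1 + c₁) * (1 + r) := by
      have : ‖v‖ ≤ ‖Uf‖ + r := by
        have : v = Uf + (v - Uf) := by abel
        calc ‖v‖ = ‖Uf + (v - Uf)‖ := by rw [← this]
          _ ≤ ‖Uf‖ + ‖v - Uf‖ := norm_add_le _ _
      nlinarith
    calc (1 + ‖v‖) ^ q ≤ ((1 + c₁) * (1 + r)) ^ q := by
          apply Real.rpow_le_rpow (by positivity) h1 hqpos.le
      _ = (1 + c₁) ^ q * (1 + r) ^ q := by
          rw [Real.mul_rpow (by positivity) (by positivity)]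
      _ ≤ (1 + c₁) ^ q * Real.exp (q * r) := by
          apply mul_le_mul_of_nonneg_left _ (by positivity)
          rw [← Real.exp_log (show (0:ℝ) < 1 + r by positivity), ← Real.exp_mul]
          apply Real.exp_le_exp.mpr
          have : Real.log (1 + r) ≤ r := by
            have := Real.log_le_sub_one_of_pos (show (0:ℝ) < 1 + r by positivity)
            linarith
          nlinarith
  -- bound the other factors
  have hrT : r / Tf ≤ Real.exp r / c₂ := by
    apply div_le_div₀ (by positivity) _ hc₂ hTc.le
    linarith [Real.add_one_le_exp r]
  have hM : (2 * π * Tf) ^ (-(3 : ℝ) / 2) ≤ (2 * π * c₂) ^ (-(3 : ℝ) / 2) :=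
    Real.rpow_le_rpow_of_nonpos (by positivity) (by nlinarith) hexp
  have hE : Real.exp (-r ^ 2 / (2 * Tf)) ≤ Real.exp (-(r ^ 2) / (2 * c₁)) := by
    apply Real.exp_le_exp.mpr
    rw [div_le_div_iff₀ (by positivity) (by positivity)]
    nlinarith [mul_le_mul_of_nonneg_left hTc₁ (sq_nonneg r)]
  -- combine exponentials
  have hcomb : Real.exp (q * r) * Real.exp r * Real.exp (-(r ^ 2) / (2 * c₁)) ≤
      Real.exp ((q + 1) ^ 2 * c₁ / 2) := by
    rw [← Real.exp_add, ← Real.exp_add]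
    apply Real.exp_le_exp.mpr
    rw [div_le_iff₀ (by norm_num : (0:ℝ) < 2)] at *
    have hsq : 0 ≤ (r - (q + 1) * c₁) ^ 2 := sq_nonneg _
    have : -(r ^ 2) / (2 * c₁) * (2 * c₁) = -(r ^ 2) := by field_simp
    nlinarith [sq_nonneg (r - (q + 1) * c₁), mul_pos hc₁ hc₁]
  -- combine everything
  have hX : (0:ℝ) < (2 * π * c₂) ^ (-(3 : ℝ) / 2) := Real.rpow_pos_of_pos (by positivity) _
  have hmain : (1 + ‖v‖) ^ q * ((r / Tf) *
      (ρf * (2 * π * Tf) ^ (-(3 : ℝ) / 2) * Real.exp (-r ^ 2 / (2 * Tf)))) ≤ B := by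
    have hinner : (r / Tf) * (ρf * (2 * π * Tf) ^ (-(3 : ℝ) / 2) *
        Real.exp (-r ^ 2 / (2 * Tf))) ≤
        (Real.exp r / c₂) * (c₁ * (2 * π * c₂) ^ (-(3 : ℝ) / 2) *
          Real.exp (-(r ^ 2) / (2 * c₁))) := by
      have h1 : ρf * (2 * π * Tf) ^ (-(3 : ℝ) / 2) ≤
          c₁ * (2 * π * c₂) ^ (-(3 : ℝ) / 2) :=
        mul_le_mul hρc₁ hM (le_of_lt (Real.rpow_pos_of_pos (by positivity) _)) hc₁.le
      have h2 : ρf * (2 * π * Tf) ^ (-(3 : ℝ) / 2) * Real.exp (-r ^ 2 / (2 * Tf)) ≤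
          c₁ * (2 * π * c₂) ^ (-(3 : ℝ) / 2) * Real.exp (-(r ^ 2) / (2 * c₁)) := by
        apply mul_le_mul h1 hE (Real.exp_pos _).le (by positivity)
      apply mul_le_mul hrT h2 (by positivity) (by positivity)
    calc (1 + ‖v‖) ^ q * ((r / Tf) *
        (ρf * (2 * π * Tf) ^ (-(3 : ℝ) / 2) * Real.exp (-r ^ 2 / (2 * Tf))))
        ≤ ((1 + c₁) ^ q * Real.exp (q * r)) * ((Real.exp r / c₂) *
          (c₁ * (2 * π * c₂) ^ (-(3 : ℝ) / 2) * Real.exp (-(r ^ 2) / (2 * c₁)))) := by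
          apply mul_le_mul hw hinner _ (by positivity)
          apply mul_nonneg (by positivity)
          apply mul_nonneg (by positivity) (Real.exp_pos _).le
      _ = (1 + c₁) ^ q * (c₁ / c₂) * (2 * π * c₂) ^ (-(3 : ℝ) / 2) *
          (Real.exp (q * r) * Real.exp r * Real.exp (-(r ^ 2) / (2 * c₁))) := by
          ring
      _ ≤ B := by
          rw [hB]
          apply mul_le_mul_of_nonneg_left hcomb (by positivity)
  calc (1 + ‖v‖) ^ q * ((r / Tf) *
      (ρf * (2 * π * Tf) ^ (-(3 : ℝ) / 2) * Real.exp (-r ^ 2 / (2 * Tf)))) ≤ B := hmain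
    _ ≤ B * (K + 1) / c₂ * N := by
        rw [div_mul_eq_mul_div, le_div_iff₀ hc₂]
        nlinarith [mul_le_mul_of_nonneg_left hc₂NK hBpos.le]
end

section
/- Let q > 5 and c₁, c₂ > 0, and let f : ℝ³ × ℝ³ → [0,∞), f = f(x,v), be continuously differentiable in x with ‖f‖_q := sup_{x,v} (1+|v|)^q f(x,v) < ∞ and ‖∇_x f‖_q := sup_{x,v} (1+|v|)^q |∇_x f(x,v)| < ∞, and suppose ρ_f(x) + |U_f(x)| + T_f(x) < c₁ and ρ_f(x), T_f(x) > c₂ for every x. Then there exists a constant C > 0, depending only on q, c₁, c₂, such that for every x, |∇_x ρ_f(x)| ≤ C ‖∇_x f‖_q, |∇_x U_f(x)| ≤ C ‖∇_x f‖_q, and |∇_x T_f(x)| ≤ C ‖∇_x f‖_q. -/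
open MeasureTheory Real

/-!
By the mean value inequality `f(·, v)` is Lipschitz with constant `Nd (1 + |v|)^(-q)`, so every
velocity moment `∫ f(x, v) φ(v) dv` with `|φ(v)| ≤ |v|^k` is Lipschitz in `x` with constant
`Nd ∫ |v|^k (1 + |v|)^(-q) dv`, finite for `k ≤ 2` since `q > 5`. The fields are functions of the
moments `ρ`, `m = ∫ f v` and `E = ∫ f |v|²`: `U = m / ρ` and, by expanding the square,
`T = (E / ρ - |U|²) / 3`. Since `ρ`, `|U|` and `T` lie between `c₂` and `c₁` everywhere, these
products and quotients of bounded Lipschitz functions are Lipschitz with constants depending only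
on `q, c₁, c₂`, and a Lipschitz bound at `x` bounds the derivative at `x`.
-/

open Module RealInnerProductSpace

section LipschitzAlgebra

variable {X G : Type*} [SeminormedAddCommGroup X] [NormedAddCommGroup G] [NormedSpace ℝ G]

lemma norm_smul_sub_smul_le_of_lipschitz {a : X → ℝ} {b : X → G} {A B La Lb : ℝ}
    (hA : ∀ x, ‖a x‖ ≤ A) (hB : ∀ x, ‖b x‖ ≤ B)
    (ha : ∀ x y, ‖a x - a y‖ ≤ La * ‖x - y‖) (hb : ∀ x y, ‖b x - b y‖ ≤ Lb * ‖x - y‖)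
    (x y : X) : ‖a x • b x - a y • b y‖ ≤ (A * Lb + La * B) * ‖x - y‖ := by
  have hA₀ : 0 ≤ A := (norm_nonneg _).trans (hA x)
  calc ‖a x • b x - a y • b y‖ = ‖a x • (b x - b y) + (a x - a y) • b y‖ := by
        rw [smul_sub, sub_smul, sub_add_sub_cancel]
    _ ≤ ‖a x‖ * ‖b x - b y‖ + ‖a x - a y‖ * ‖b y‖ :=
        (norm_add_le _ _).trans_eq (by rw [norm_smul, norm_smul])
    _ ≤ A * (Lb * ‖x - y‖) + La * ‖x - y‖ * B :=
        add_le_add (mul_le_mul (hA x) (hb x y) (norm_nonneg _) hA₀)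
          (mul_le_mul (ha x y) (hB y) (norm_nonneg _) ((norm_nonneg _).trans (ha x y)))
    _ = (A * Lb + La * B) * ‖x - y‖ := by ring

lemma norm_inv_sub_inv_le_of_lipschitz {a : X → ℝ} {c La : ℝ} (hc : 0 < c) (hca : ∀ x, c ≤ a x)
    (ha : ∀ x y, ‖a x - a y‖ ≤ La * ‖x - y‖) (x y : X) :
    ‖(a x)⁻¹ - (a y)⁻¹‖ ≤ La / c ^ 2 * ‖x - y‖ := by
  have hax := hc.trans_le (hca x)
  have hay := hc.trans_le (hca y)
  rw [inv_sub_inv hax.ne' hay.ne', norm_div, norm_sub_rev, norm_mul, Real.norm_of_nonneg hax.le,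
    Real.norm_of_nonneg hay.le, div_mul_eq_mul_div, sq]
  exact div_le_div₀ ((norm_nonneg _).trans (ha x y)) (ha x y) (by positivity)
    (mul_le_mul (hca x) (hca y) hc.le hax.le)

lemma norm_inv_smul_sub_inv_smul_le_of_lipschitz {a : X → ℝ} {b : X → G} {c B La Lb : ℝ}
    (hc : 0 < c) (hca : ∀ x, c ≤ a x) (hB : ∀ x, ‖b x‖ ≤ B)
    (ha : ∀ x y, ‖a x - a y‖ ≤ La * ‖x - y‖) (hb : ∀ x y, ‖b x - b y‖ ≤ Lb * ‖x - y‖)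
    (x y : X) : ‖(a x)⁻¹ • b x - (a y)⁻¹ • b y‖ ≤ (c⁻¹ * Lb + La / c ^ 2 * B) * ‖x - y‖ := by
  have hinv (x : X) : ‖(a x)⁻¹‖ ≤ c⁻¹ := by
    rw [norm_inv, Real.norm_of_nonneg (hc.le.trans (hca x))]
    exact inv_anti₀ hc (hca x)
  exact norm_smul_sub_smul_le_of_lipschitz (a := fun x => (a x)⁻¹) hinv hB
    (norm_inv_sub_inv_le_of_lipschitz hc hca ha) hb x y

end LipschitzAlgebra

lemma le_mul_rpow_neg_of_rpow_mul_le {t a N q : ℝ} (ht : 0 < t) (h : t ^ q * a ≤ N) :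
    a ≤ N * t ^ (-q) := by
  rwa [rpow_neg ht.le, ← div_eq_mul_inv, le_div_iff₀' (rpow_pos_of_pos ht q)]

lemma norm_integral_sub_integral_le {X α G : Type*} [SeminormedAddCommGroup X]
    [MeasurableSpace α] {μ : Measure α} [NormedAddCommGroup G] [NormedSpace ℝ G]
    {F : X → α → G} {b : α → ℝ} (hF : ∀ x, Integrable (F x) μ) (hb : Integrable b μ)
    (hFb : ∀ x y a, ‖F x a - F y a‖ ≤ b a * ‖x - y‖) (x y : X) :
    ‖∫ a, F x a ∂μ - ∫ a, F y a ∂μ‖ ≤ (∫ a, b a ∂μ) * ‖x - y‖ := by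
  rw [← integral_sub (hF x) (hF y), ← integral_mul_const]
  exact norm_integral_le_of_norm_le (hb.mul_const _) (ae_of_all _ (hFb x y))

noncomputable abbrev weightMoment {V : Type*} [NormedAddCommGroup V] [MeasurableSpace V]
    (μ : Measure V) (q : ℝ) (k : ℕ) : ℝ :=
  ∫ v, ‖v‖ ^ k * (1 + ‖v‖) ^ (-q) ∂μ

section VelocityMoments

variable {E V G : Type*} [NormedAddCommGroup V] [NormedSpace ℝ V] [FiniteDimensional ℝ V]
  [MeasurableSpace V] [BorelSpace V] {μ : Measure V} [μ.IsAddHaarMeasure]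
  [NormedAddCommGroup G] [NormedSpace ℝ G]

lemma integrable_norm_pow_mul_one_add_norm_rpow_neg {k : ℕ} {q : ℝ}
    (hq : k + finrank ℝ V < q) : Integrable (fun v : V => ‖v‖ ^ k * (1 + ‖v‖) ^ (-q)) μ := by
  refine (integrable_one_add_norm (r := q - k) (by linarith)).mono' (by fun_prop)
    (ae_of_all _ fun v => ?_)
  have h₁ : (0 : ℝ) < 1 + ‖v‖ := by positivity
  rw [Real.norm_of_nonneg (by positivity), neg_sub, sub_eq_add_neg, rpow_add h₁, rpow_natCast]
  gcongr
  linarith [norm_nonneg v]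

variable {f : E × V → ℝ} {q : ℝ} {φ : V → G} {k : ℕ}

lemma integrable_moment [MeasurableSpace E] (hf : Measurable f) (hf₀ : ∀ z, 0 ≤ f z) {N : ℝ}
    (hN : ∀ x v, (1 + ‖v‖) ^ q * f (x, v) ≤ N) (hφ : Continuous φ)
    (hφk : ∀ v, ‖φ v‖ ≤ ‖v‖ ^ k) (hq : k + finrank ℝ V < q) (x : E) :
    Integrable (fun v => f (x, v) • φ v) μ := by
  refine ((integrable_norm_pow_mul_one_add_norm_rpow_neg hq).const_mul N).mono'
    ((hf.comp measurable_prodMk_left).aestronglyMeasurable.smul hφ.aestronglyMeasurable)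
    (ae_of_all _ fun v => ?_)
  have hdecay := le_mul_rpow_neg_of_rpow_mul_le (by positivity) (hN x v)
  rw [norm_smul, Real.norm_of_nonneg (hf₀ _)]
  calc f (x, v) * ‖φ v‖ ≤ N * (1 + ‖v‖) ^ (-q) * ‖v‖ ^ k :=
        mul_le_mul hdecay (hφk v) (norm_nonneg _) ((hf₀ _).trans hdecay)
    _ = N * (‖v‖ ^ k * (1 + ‖v‖) ^ (-q)) := by ring

variable [NormedAddCommGroup E] [NormedSpace ℝ E]

lemma norm_moment_sub_le (hint : ∀ x, Integrable (fun v => f (x, v) • φ v) μ)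
    (hfd : ∀ v, Differentiable ℝ fun x => f (x, v)) {Nd : ℝ}
    (hNd : ∀ x v, (1 + ‖v‖) ^ q * ‖fderiv ℝ (fun y => f (y, v)) x‖ ≤ Nd)
    (hφk : ∀ v, ‖φ v‖ ≤ ‖v‖ ^ k) (hq : k + finrank ℝ V < q) (x y : E) :
    ‖∫ v, f (x, v) • φ v ∂μ - ∫ v, f (y, v) • φ v ∂μ‖ ≤
      Nd * weightMoment μ q k * ‖x - y‖ := by
  rw [weightMoment, ← integral_const_mul]
  refine norm_integral_sub_integral_le hint
    ((integrable_norm_pow_mul_one_add_norm_rpow_neg hq).const_mul Nd) (fun x y v => ?_) x y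
  have hmvt : ‖f (x, v) - f (y, v)‖ ≤ Nd * (1 + ‖v‖) ^ (-q) * ‖x - y‖ :=
    convex_univ.norm_image_sub_le_of_norm_fderiv_le (fun z _ => hfd v z)
      (fun z _ => le_mul_rpow_neg_of_rpow_mul_le (by positivity) (hNd z v)) trivial trivial
  rw [← sub_smul, norm_smul]
  calc ‖f (x, v) - f (y, v)‖ * ‖φ v‖ ≤ Nd * (1 + ‖v‖) ^ (-q) * ‖x - y‖ * ‖v‖ ^ k :=
        mul_le_mul hmvt (hφk v) (norm_nonneg _) ((norm_nonneg _).trans hmvt)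
    _ = Nd * (‖v‖ ^ k * (1 + ‖v‖) ^ (-q)) * ‖x - y‖ := by ring

lemma norm_moments_sub_le [MeasurableSpace E] (hf : Measurable f) (hf₀ : ∀ z, 0 ≤ f z)
    {N Nd : ℝ} (hN : ∀ x v, (1 + ‖v‖) ^ q * f (x, v) ≤ N)
    (hfd : ∀ v, Differentiable ℝ fun x => f (x, v))
    (hNd : ∀ x v, (1 + ‖v‖) ^ q * ‖fderiv ℝ (fun y => f (y, v)) x‖ ≤ Nd)
    (hq : 2 + finrank ℝ V < q) :
    (∀ x y, ‖(∫ v, f (x, v) ∂μ) - ∫ v, f (y, v) ∂μ‖ ≤ Nd * weightMoment μ q 0 * ‖x - y‖) ∧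
    (∀ x y, ‖(∫ v, f (x, v) • v ∂μ) - ∫ v, f (y, v) • v ∂μ‖ ≤ Nd * weightMoment μ q 1 * ‖x - y‖) ∧
    (∀ x y, ‖(∫ v, f (x, v) * ‖v‖ ^ 2 ∂μ) - ∫ v, f (y, v) * ‖v‖ ^ 2 ∂μ‖ ≤
      Nd * weightMoment μ q 2 * ‖x - y‖) := by
  have hq₀ : ((0 : ℕ) : ℝ) + finrank ℝ V < q := by push_cast; linarith
  have hq₁ : ((1 : ℕ) : ℝ) + finrank ℝ V < q := by push_cast; linarith
  have hq₂ : ((2 : ℕ) : ℝ) + finrank ℝ V < q := by exact_mod_cast hq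
  refine ⟨?_, ?_, ?_⟩
  · simpa using norm_moment_sub_le (μ := μ) (φ := fun _ => (1 : ℝ))
      (integrable_moment hf hf₀ hN continuous_const (by simp) hq₀) hfd hNd (by simp) hq₀
  · exact norm_moment_sub_le (φ := fun v => v)
      (integrable_moment hf hf₀ hN continuous_id (by simp) hq₁) hfd hNd (by simp) hq₁
  · exact norm_moment_sub_le (φ := fun v => ‖v‖ ^ 2)
      (integrable_moment hf hf₀ hN (by fun_prop) (by simp) hq₂) hfd hNd (by simp) hq₂

end VelocityMoments

section MacroscopicFields

variable {X V : Type*} [SeminormedAddCommGroup X] [NormedAddCommGroup V]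

lemma integral_norm_sub_sq_mul_eq [InnerProductSpace ℝ V] [CompleteSpace V] [MeasurableSpace V]
    {μ : Measure V} {g : V → ℝ} {u : V}
    (hg : Integrable g μ) (hgv : Integrable (fun v => g v • v) μ)
    (hgv₂ : Integrable (fun v => g v * ‖v‖ ^ 2) μ) (hu : ∫ v, g v • v ∂μ = (∫ v, g v ∂μ) • u) :
    ∫ v, ‖v - u‖ ^ 2 * g v ∂μ = ∫ v, g v * ‖v‖ ^ 2 ∂μ - (∫ v, g v ∂μ) * ‖u‖ ^ 2 := by
  have hexpand : (fun v => ‖v - u‖ ^ 2 * g v) =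
      fun v => g v * ‖v‖ ^ 2 - 2 * ⟪u, g v • v⟫ + ‖u‖ ^ 2 * g v := by
    funext v
    rw [norm_sub_sq_real, inner_smul_right, real_inner_comm]
    ring
  have hcross : Integrable (fun v => 2 * ⟪u, g v • v⟫) μ := (hgv.const_inner u).const_mul 2
  rw [hexpand, integral_add (f := fun v => g v * ‖v‖ ^ 2 - 2 * ⟪u, g v • v⟫) (hgv₂.sub hcross)
    (hg.const_mul _), integral_sub hgv₂ hcross, integral_const_mul, integral_const_mul,
    integral_inner hgv, hu, inner_smul_right, real_inner_self_eq_norm_sq]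
  ring

variable {ρ T S : X → ℝ} {m U : X → V} {c₁ c₂ Lρ : ℝ}

lemma norm_bulkVelocity_sub_le [NormedSpace ℝ V] {Lm : ℝ} (hc₂ : 0 < c₂) (hρ₂ : ∀ x, c₂ ≤ ρ x)
    (hρ₁ : ∀ x, ρ x ≤ c₁) (hU₁ : ∀ x, ‖U x‖ ≤ c₁) (hU : ∀ x, U x = (ρ x)⁻¹ • m x)
    (hρL : ∀ x y, ‖ρ x - ρ y‖ ≤ Lρ * ‖x - y‖) (hmL : ∀ x y, ‖m x - m y‖ ≤ Lm * ‖x - y‖)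
    (x y : X) : ‖U x - U y‖ ≤ (c₂⁻¹ * Lm + Lρ / c₂ ^ 2 * c₁ ^ 2) * ‖x - y‖ := by
  have hm (x : X) : ‖m x‖ ≤ c₁ ^ 2 := by
    have hρ₀ : 0 < ρ x := hc₂.trans_le (hρ₂ x)
    rw [← smul_inv_smul₀ hρ₀.ne' (m x), ← hU, norm_smul, Real.norm_of_nonneg hρ₀.le, sq]
    exact mul_le_mul (hρ₁ x) (hU₁ x) (norm_nonneg _) (hρ₀.le.trans (hρ₁ x))
  simpa only [hU] using norm_inv_smul_sub_inv_smul_le_of_lipschitz hc₂ hρ₂ hm hρL hmL x y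

lemma norm_temperature_sub_le {LS LU : ℝ} (hc₂ : 0 < c₂) (hρ₂ : ∀ x, c₂ ≤ ρ x)
    (hρ₁ : ∀ x, ρ x ≤ c₁) (hU₁ : ∀ x, ‖U x‖ ≤ c₁) (hT₀ : ∀ x, 0 ≤ T x) (hT₁ : ∀ x, T x ≤ c₁)
    (hT : ∀ x, T x = (3 * ρ x)⁻¹ * (S x - ρ x * ‖U x‖ ^ 2))
    (hρL : ∀ x y, ‖ρ x - ρ y‖ ≤ Lρ * ‖x - y‖) (hSL : ∀ x y, ‖S x - S y‖ ≤ LS * ‖x - y‖)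
    (hUL : ∀ x y, ‖U x - U y‖ ≤ LU * ‖x - y‖) (x y : X) :
    ‖T x - T y‖ ≤
      3⁻¹ * (c₂⁻¹ * LS + Lρ / c₂ ^ 2 * (3 * c₁ ^ 2 + c₁ ^ 3) + 2 * c₁ * LU) * ‖x - y‖ := by
  have hρ₀ (x : X) : 0 < ρ x := hc₂.trans_le (hρ₂ x)
  have hS (x : X) : S x = 3 * ρ x * T x + ρ x * ‖U x‖ ^ 2 := by
    rw [hT]; field_simp [(hρ₀ x).ne']; ring
  have hTquot (x : X) : T x = 3⁻¹ * ((ρ x)⁻¹ • S x - ‖U x‖ • ‖U x‖) := by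
    rw [hT, smul_eq_mul, smul_eq_mul]; field_simp [(hρ₀ x).ne']
  have hSbound (x : X) : ‖S x‖ ≤ 3 * c₁ ^ 2 + c₁ ^ 3 := by
    have hρx := (hρ₀ x).le
    have hTx := hT₀ x
    rw [hS, Real.norm_of_nonneg (by positivity)]
    calc 3 * ρ x * T x + ρ x * ‖U x‖ ^ 2 ≤ 3 * c₁ * c₁ + c₁ * c₁ ^ 2 := by
          gcongr <;> linarith [hρ₁ x, hT₁ x, hU₁ x]
      _ = 3 * c₁ ^ 2 + c₁ ^ 3 := by ring
  have hquot := norm_inv_smul_sub_inv_smul_le_of_lipschitz hc₂ hρ₂ hSbound hρL hSL x y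
  have hnormSq := norm_smul_sub_smul_le_of_lipschitz (a := fun x => ‖U x‖) (b := fun x => ‖U x‖)
    (by simpa using hU₁) (by simpa using hU₁)
    (fun x y => (abs_norm_sub_norm_le _ _).trans (hUL x y))
    (fun x y => (abs_norm_sub_norm_le _ _).trans (hUL x y)) x y
  rw [hTquot x, hTquot y, ← mul_sub, norm_mul, sub_sub_sub_comm, norm_inv, Real.norm_ofNat]
  calc 3⁻¹ * ‖(ρ x)⁻¹ • S x - (ρ y)⁻¹ • S y - (‖U x‖ • ‖U x‖ - ‖U y‖ • ‖U y‖)‖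
      ≤ 3⁻¹ * ((c₂⁻¹ * LS + Lρ / c₂ ^ 2 * (3 * c₁ ^ 2 + c₁ ^ 3)) * ‖x - y‖
          + (c₁ * LU + LU * c₁) * ‖x - y‖) := by
        gcongr
        exact (norm_sub_le _ _).trans (add_le_add hquot hnormSq)
    _ = 3⁻¹ * (c₂⁻¹ * LS + Lρ / c₂ ^ 2 * (3 * c₁ ^ 2 + c₁ ^ 3) + 2 * c₁ * LU) * ‖x - y‖ := by
        ring

lemma norm_bulkVelocity_temperature_sub_le [NormedSpace ℝ V] {Nd K₀ K₁ K₂ : ℝ} (hc₂ : 0 < c₂)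
    (hρ₂ : ∀ x, c₂ ≤ ρ x) (hT₀ : ∀ x, 0 ≤ T x) (hsum : ∀ x, ρ x + ‖U x‖ + T x ≤ c₁)
    (hU : ∀ x, U x = (ρ x)⁻¹ • m x) (hT : ∀ x, T x = (3 * ρ x)⁻¹ * (S x - ρ x * ‖U x‖ ^ 2))
    (hρL : ∀ x y, ‖ρ x - ρ y‖ ≤ Nd * K₀ * ‖x - y‖) (hmL : ∀ x y, ‖m x - m y‖ ≤ Nd * K₁ * ‖x - y‖)
    (hSL : ∀ x y, ‖S x - S y‖ ≤ Nd * K₂ * ‖x - y‖) :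
    (∀ x y, ‖U x - U y‖ ≤ Nd * (c₂⁻¹ * K₁ + K₀ / c₂ ^ 2 * c₁ ^ 2) * ‖x - y‖) ∧
    ∀ x y, ‖T x - T y‖ ≤ Nd * (3⁻¹ * (c₂⁻¹ * K₂ + K₀ / c₂ ^ 2 * (3 * c₁ ^ 2 + c₁ ^ 3) +
      2 * c₁ * (c₂⁻¹ * K₁ + K₀ / c₂ ^ 2 * c₁ ^ 2))) * ‖x - y‖ := by
  have hbd (x : X) : ρ x ≤ c₁ ∧ ‖U x‖ ≤ c₁ ∧ T x ≤ c₁ := by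
    have := hsum x; have := hc₂.trans_le (hρ₂ x); have := hT₀ x; have := norm_nonneg (U x)
    refine ⟨?_, ?_, ?_⟩ <;> linarith
  have hUL :=
    norm_bulkVelocity_sub_le hc₂ hρ₂ (fun x => (hbd x).1) (fun x => (hbd x).2.1) hU hρL hmL
  refine ⟨fun x y => (hUL x y).trans_eq (by ring), fun x y => ?_⟩
  refine (norm_temperature_sub_le hc₂ hρ₂ (fun x => (hbd x).1) (fun x => (hbd x).2.1) hT₀
    (fun x => (hbd x).2.2) hT hρL hSL hUL x y).trans_eq ?_
  ring

end MacroscopicFields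

/-- gradient bounds on the macroscopic fields: under the stated
hypotheses, |∇_x ρ_f| ≤ C‖∇_x f‖_q, |∇_x U_f| ≤ C‖∇_x f‖_q, and
|∇_x T_f| ≤ C‖∇_x f‖_q, with C depending only on q, c₁, c₂. -/
theorem macro_field_gradient_bounds (q c₁ c₂ : ℝ) (hq : 5 < q)
    (hc₁ : 0 < c₁) (hc₂ : 0 < c₂) :
    ∃ C : ℝ, 0 < C ∧
      ∀ (f : E3 × E3 → ℝ),
        Measurable f → (∀ z, 0 ≤ f z) →
        (∀ v : E3, ContDiff ℝ 1 (fun x : E3 => f (x, v))) →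
        ∀ N : ℝ, (∀ (x v : E3), (1 + ‖v‖) ^ q * f (x, v) ≤ N) →
        ∀ Nd : ℝ,
          (∀ (x v : E3), (1 + ‖v‖) ^ q * ‖fderiv ℝ (fun y : E3 => f (y, v)) x‖ ≤ Nd) →
        ∀ (ρf : E3 → ℝ) (Uf : E3 → E3) (Tf : E3 → ℝ),
          (∀ x, Integrable (fun v => f (x, v))) →
          (∀ x, ρf x = ∫ v, f (x, v)) →
          (∀ x, Integrable (fun v => f (x, v) • v)) →
          (∀ x, Uf x = (ρf x)⁻¹ • ∫ v, f (x, v) • v) →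
          (∀ x, Integrable (fun v => ‖v - Uf x‖ ^ 2 * f (x, v))) →
          (∀ x, Tf x = (3 * ρf x)⁻¹ * ∫ v, ‖v - Uf x‖ ^ 2 * f (x, v)) →
          (∀ x, ρf x + ‖Uf x‖ + Tf x < c₁) →
          (∀ x, c₂ < ρf x) → (∀ x, c₂ < Tf x) →
          ∀ x : E3,
            ‖fderiv ℝ ρf x‖ ≤ C * Nd ∧
            ‖fderiv ℝ Uf x‖ ≤ C * Nd ∧
            ‖fderiv ℝ Tf x‖ ≤ C * Nd := by
  set K := weightMoment (volume : Measure E3) q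
  set CU := c₂⁻¹ * K 1 + K 0 / c₂ ^ 2 * c₁ ^ 2
  set CT := 3⁻¹ * (c₂⁻¹ * K 2 + K 0 / c₂ ^ 2 * (3 * c₁ ^ 2 + c₁ ^ 3) + 2 * c₁ * CU)
  have hK (k : ℕ) : 0 ≤ K k := integral_nonneg fun v => by positivity
  have hCU : 0 ≤ CU := by positivity
  have hCT : 0 ≤ CT := by positivity
  refine ⟨K 0 + CU + CT + 1, by positivity, ?_⟩
  intro f hf hf₀ hfC N hN Nd hNd ρf Uf Tf hρint hρ hmint hU _ hT hsum hρc₂ hTc₂ x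
  have hqdim : 2 + finrank ℝ E3 < q := by rw [finrank_euclideanSpace_fin]; push_cast; linarith
  obtain ⟨hρL, hmL, hSL⟩ := norm_moments_sub_le (μ := volume) hf hf₀ hN
    (fun v => (hfC v).differentiable one_ne_zero) hNd hqdim
  simp only [← hρ] at hρL
  have hTS (x : E3) : Tf x = (3 * ρf x)⁻¹ * ((∫ v, f (x, v) * ‖v‖ ^ 2) - ρf x * ‖Uf x‖ ^ 2) := by
    have hSint := integrable_moment (μ := volume) hf hf₀ hN (φ := fun v : E3 => ‖v‖ ^ 2)
      (k := 2) (by fun_prop) (by simp) (by exact_mod_cast hqdim) x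
    rw [hT, integral_norm_sub_sq_mul_eq (hρint x) (hmint x) hSint
      (by rw [hU, ← hρ, smul_inv_smul₀ (hc₂.trans (hρc₂ x)).ne']), hρ]
  obtain ⟨hUL, hTL⟩ := norm_bulkVelocity_temperature_sub_le hc₂ (fun x => (hρc₂ x).le)
    (fun x => hc₂.le.trans (hTc₂ x).le) (fun x => (hsum x).le) hU hTS hρL hmL hSL
  have hNd₀ : 0 ≤ Nd := (mul_nonneg (by positivity) (norm_nonneg _)).trans (hNd 0 0)
  have hclose {κ : ℝ} (hκ : κ ≤ K 0 + CU + CT + 1) (y : E3) :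
      Nd * κ * ‖y - x‖ ≤ (K 0 + CU + CT + 1) * Nd * ‖y - x‖ := by
    rw [mul_comm _ Nd]; gcongr
  refine ⟨?_, ?_, ?_⟩ <;> refine norm_fderiv_le_of_lip' ℝ (mul_nonneg (by positivity) hNd₀)
    (Filter.Eventually.of_forall fun y => ?_)
  · exact (hρL y x).trans (hclose (κ := K 0) (by linarith) y)
  · exact (hUL y x).trans (hclose (κ := CU) (by linarith [hK 0]) y)
  · exact (hTL y x).trans (hclose (κ := CT) (by linarith [hK 0]) y)
end
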